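/- Let P : [0,a]×[0,b] → GL(V) be C² in both variables with P(x₀,0) = I for all x₀, and suppose ∂₁P(x) = -A₁(x)P(x) for a C¹ map A₁. Then ∂₁(P(x)⁻¹ ∂₀P(x)) = -P(x)⁻¹ (∂₀A₁)(x) P(x). -/

import Mathlib

/-!
Differentiating `P⁻¹ ∂₀P` in the second variable gives `-P⁻¹ (∂₁P) P⁻¹ ∂₀P + P⁻¹ ∂₁∂₀P`.
By symmetry of second derivatives, `∂₁∂₀P = ∂₀∂₁P = -(∂₀A₁) P - A₁ ∂₀P`, and after substituting
`∂₁P = -A₁ P` the two terms `P⁻¹ A₁ ∂₀P` cancel.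
-/

open ContinuousLinearMap

theorem Ring.inverse_eq_of_mul_eq_one {M₀ : Type*} [MonoidWithZero M₀] {a b : M₀}
    (hab : a * b = 1) (hba : b * a = 1) : Ring.inverse a = b :=
  Ring.inverse_unit ⟨a, b, hab, hba⟩

theorem fderiv_ringInverse_mul_apply {𝕜 E R : Type*} [NontriviallyNormedField 𝕜]
    [NormedAddCommGroup E] [NormedSpace 𝕜 E] [NormedRing R] [HasSummableGeomSeries R]
    [NormedAlgebra 𝕜 R] {f g : E → R} {x : E} (hf : DifferentiableAt 𝕜 f x)
    (hg : DifferentiableAt 𝕜 g x) (hfx : IsUnit (f x)) (v : E) :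
    fderiv 𝕜 (fun y => Ring.inverse (f y) * g y) x v =
      Ring.inverse (f x) * (fderiv 𝕜 g x v - fderiv 𝕜 f x v * Ring.inverse (f x) * g x) := by
  obtain ⟨u, hu⟩ := hfx
  have hinv : HasFDerivAt Ring.inverse (-mulLeftRight 𝕜 R ↑u⁻¹ ↑u⁻¹) (f x) :=
    hu ▸ hasFDerivAt_ringInverse u
  have hprod : HasFDerivAt (fun y => Ring.inverse (f y) * g y) _ x :=
    (hinv.comp x hf.hasFDerivAt).fun_mul' hg.hasFDerivAt
  rw [hprod.fderiv]
  simp only [add_apply, smul_apply, comp_apply, neg_apply, mulLeftRight_apply, smul_eq_mul,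
    op_smul_eq_mul, Function.comp_apply, ← hu, Ring.inverse_unit]
  noncomm_ring

theorem fderiv_fderiv_apply_comm {E F : Type*} [NormedAddCommGroup E] [NormedSpace ℝ E]
    [NormedAddCommGroup F] [NormedSpace ℝ F] {f : E → F} {x : E} (hf : ContDiffAt ℝ 2 f x)
    (v w : E) :
    fderiv ℝ (fun y => fderiv ℝ f y v) x w = fderiv ℝ (fun y => fderiv ℝ f y w) x v := by
  have hdf : DifferentiableAt ℝ (fderiv ℝ f) x :=
    (hf.fderiv_right (m := 1) le_rfl).differentiableAt one_ne_zero
  rw [fderiv_clm_apply hdf (differentiableAt_const v),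
    fderiv_clm_apply hdf (differentiableAt_const w)]
  simpa using hf.isSymmSndFDerivAt (by simp) w v

theorem partial_deriv_conjugated_ODE_general
    {V : Type*} [NormedAddCommGroup V] [NormedSpace ℝ V] [FiniteDimensional ℝ V]
    (P Pinv A₁ : ℝ × ℝ → V →L[ℝ] V)
    (hP : ContDiff ℝ 2 P)
    (hA₁ : ContDiff ℝ 1 A₁)
    (hinv : ∀ x : ℝ × ℝ, (P x).comp (Pinv x) = 1 ∧ (Pinv x).comp (P x) = 1)
    (hODE : ∀ x : ℝ × ℝ, fderiv ℝ P x (0, 1) = -((A₁ x).comp (P x))) :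
    ∀ x : ℝ × ℝ,
      fderiv ℝ (fun y : ℝ × ℝ => (Pinv y).comp (fderiv ℝ P y (1, 0))) x (0, 1)
        = -((Pinv x).comp (((fderiv ℝ A₁ x (1, 0))).comp (P x))) := by
  intro x
  have hPd : Differentiable ℝ P := hP.differentiable two_ne_zero
  have hunit : IsUnit (P x) := ⟨⟨P x, Pinv x, (hinv x).1, (hinv x).2⟩, rfl⟩
  have hPinv : Pinv = fun y => Ring.inverse (P y) :=
    funext fun y => (Ring.inverse_eq_of_mul_eq_one (hinv y).1 (hinv y).2).symm
  have hdP₀ : DifferentiableAt ℝ (fun y => fderiv ℝ P y (1, 0)) x :=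
    ((hP.fderiv_right le_rfl).differentiable one_ne_zero x).clm_apply (differentiableAt_const _)
  have hmixed : fderiv ℝ (fun y => fderiv ℝ P y (1, 0)) x (0, 1) =
      -(fderiv ℝ A₁ x (1, 0) * P x + A₁ x * fderiv ℝ P x (1, 0)) := by
    rw [fderiv_fderiv_apply_comm hP.contDiffAt, funext hODE]
    simp only [← mul_def]
    rw [fderiv_fun_neg, fderiv_fun_mul' (hA₁.differentiable one_ne_zero x) (hPd x)]
    simp only [neg_apply, add_apply, smul_apply, smul_eq_mul, op_smul_eq_mul, add_comm]
  subst hPinv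
  simp only [← mul_def]
  rw [fderiv_ringInverse_mul_apply (hPd x) hdP₀ hunit, hmixed, hODE x, ← mul_def, neg_mul,
    mul_assoc (A₁ x), Ring.mul_inverse_cancel _ hunit, mul_one]
  noncomm_ring

/-- for a C² family `P` of invertible endomorphisms with `P(x₀,0) = I`
satisfying `∂₁P = -A₁ P` for a C¹ map `A₁`, one has
`∂₁(P⁻¹ ∂₀P) = -P⁻¹ (∂₀A₁) P`.  Here `∂₀`, `∂₁` are the partial derivatives in the
two coordinates, realized via `fderiv` in the directions `(1,0)` and `(0,1)`, and the
pointwise inverse of `P` is given as the map `Pinv`. -/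
theorem partial_deriv_conjugated_ODE
    {V : Type*} [NormedAddCommGroup V] [NormedSpace ℝ V] [FiniteDimensional ℝ V]
    (P Pinv A₁ : ℝ × ℝ → V →L[ℝ] V)
    (hP : ContDiff ℝ 2 P)
    (hA₁ : ContDiff ℝ 1 A₁)
    (hinv : ∀ x : ℝ × ℝ, (P x).comp (Pinv x) = 1 ∧ (Pinv x).comp (P x) = 1)
    (hinit : ∀ x₀ : ℝ, P (x₀, 0) = 1)
    (hODE : ∀ x : ℝ × ℝ, fderiv ℝ P x (0, 1) = -((A₁ x).comp (P x))) :
    ∀ x : ℝ × ℝ,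
      fderiv ℝ (fun y : ℝ × ℝ => (Pinv y).comp (fderiv ℝ P y (1, 0))) x (0, 1)
        = -((Pinv x).comp (((fderiv ℝ A₁ x (1, 0))).comp (P x))) :=
  partial_deriv_conjugated_ODE_general P Pinv A₁ hP hA₁ hinv hODE
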